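/- arXiv:2111.04578 — 2 statements merged into one kernel-verified Lean document; each statement's English description precedes it below -/
import Mathlib

section
/- Let f_W be an L-layer feedforward network with weights W = (W_1, …, W_L) and 1-Lipschitz, origin-preserving activations. Let U = (U_1, …, U_L) be perturbation matrices with U_i of the same shape as W_i, and suppose ‖U_i‖_2 ≤ e for every i = 1, …, L and some e ≥ 0. Then for every input x ∈ ℝ^{d_0}, ‖f_{W+U}(x) − f_W(x)‖_2 ≤ e · ‖x‖_2 · Σ_{i=1}^{L} Π_{j=1}^{L} (‖W_j‖_2 + e) / (‖W_i‖_2 + e), where f_{W+U} denotes the network with weights (W_1 + U_1, …, W_L + U_L). -/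
open MeasureTheory ProbabilityTheory Finset

noncomputable def specNorm {m n : ℕ} (M : Matrix (Fin m) (Fin n) ℝ) : ℝ :=
  ‖LinearMap.toContinuousLinearMap (Matrix.toEuclideanLin M)‖

noncomputable def frobNorm {m n : ℕ} (M : Matrix (Fin m) (Fin n) ℝ) : ℝ :=
  Real.sqrt (∑ i, ∑ j, (M i j)^2)

noncomputable def netOutput (d : ℕ → ℕ)
    (W : ∀ i : ℕ, Matrix (Fin (d (i+1))) (Fin (d i)) ℝ)
    (ψ : ∀ i : ℕ, EuclideanSpace ℝ (Fin (d (i+1))) → EuclideanSpace ℝ (Fin (d (i+1)))) :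
    (k : ℕ) → EuclideanSpace ℝ (Fin (d 0)) → EuclideanSpace ℝ (Fin (d k))
  | 0 => fun x => x
  | (k+1) => fun x => ψ k (Matrix.toEuclideanLin (W k) (netOutput d W ψ k x))

instance {m n R : Type*} [MeasurableSpace R] : MeasurableSpace (Matrix m n R) :=
  inferInstanceAs (MeasurableSpace (m → n → R))

noncomputable def gaussianMatrix (d₁ d₂ : ℕ) (σ : ℝ) :
    Measure (Matrix (Fin d₁) (Fin d₂) ℝ) :=
  Measure.pi fun _ : Fin d₁ => Measure.pi fun _ : Fin d₂ => gaussianReal 0 (σ^2).toNNReal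

noncomputable def klDiv {α : Type*} [MeasurableSpace α] (P Q : Measure α) : ℝ :=
  ∫ x, Real.log (P.rnDeriv Q x).toReal ∂P

/-! The perturbed and unperturbed activations differ at layer `k + 1` by at most
`‖W_k‖ δ_k + ‖U_k‖ ‖f'_k‖`, where `δ_k` is the previous difference and `f'_k` the perturbed
activation, which itself grows by at most `‖W_k‖ + e` per layer. Unrolling this linear recursion
with `c_j = ‖W_j‖ + e` gives `δ_L ≤ e ‖x‖ ∑_i ∏_{j ≠ i} c_j`, and `∏_{j ≠ i} c_j = ∏_j c_j / c_i`
unless `e = 0`, in which case both sides of the claim vanish. -/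

theorem Finset.sum_prod_erase_insert {ι R : Type*} [DecidableEq ι] [CommSemiring R]
    {s : Finset ι} {a : ι} (ha : a ∉ s) (c : ι → R) :
    ∑ i ∈ insert a s, ∏ j ∈ (insert a s).erase i, c j =
      c a * ∑ i ∈ s, ∏ j ∈ s.erase i, c j + ∏ j ∈ s, c j := by
  have herase : ∀ i ∈ s, ∏ j ∈ (insert a s).erase i, c j = c a * ∏ j ∈ s.erase i, c j := by
    intro i hi
    rw [Finset.erase_insert_of_ne (ne_of_mem_of_not_mem hi ha).symm,
      Finset.prod_insert (fun h => ha (Finset.mem_of_mem_erase h))]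
  rw [Finset.sum_insert ha, Finset.erase_insert ha, Finset.sum_congr rfl herase, ← Finset.mul_sum,
    add_comm]

section LinearRecursion

variable {a δ c : ℕ → ℝ} {e : ℝ}

theorem le_mul_prod_range_of_le_mul {n : ℕ} (hc : ∀ j, 0 ≤ c j)
    (ha : ∀ k < n, a (k + 1) ≤ c k * a k) :
    a n ≤ a 0 * ∏ j ∈ range n, c j := by
  induction n with
  | zero => simp
  | succ n ih =>
    calc a (n + 1) ≤ c n * a n := ha n n.lt_succ_self
      _ ≤ c n * (a 0 * ∏ j ∈ range n, c j) :=
        mul_le_mul_of_nonneg_left (ih fun k hk => ha k (hk.trans n.lt_succ_self)) (hc n)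
      _ = a 0 * ∏ j ∈ range (n + 1), c j := by rw [prod_range_succ]; ring

theorem le_sum_prod_erase_range_of_le_mul_add {n : ℕ} (hc : ∀ j, 0 ≤ c j) (he : 0 ≤ e)
    (ha : ∀ k < n, a (k + 1) ≤ c k * a k) (hδ : ∀ k < n, δ (k + 1) ≤ c k * δ k + e * a k)
    (hδ0 : δ 0 ≤ 0) :
    δ n ≤ e * a 0 * ∑ i ∈ range n, ∏ j ∈ (range n).erase i, c j := by
  induction n with
  | zero => simpa using hδ0
  | succ n ih =>
    have ha' : ∀ k < n, a (k + 1) ≤ c k * a k := fun k hk => ha k (hk.trans n.lt_succ_self)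
    have hδ' : ∀ k < n, δ (k + 1) ≤ c k * δ k + e * a k :=
      fun k hk => hδ k (hk.trans n.lt_succ_self)
    calc δ (n + 1) ≤ c n * δ n + e * a n := hδ n n.lt_succ_self
      _ ≤ c n * (e * a 0 * ∑ i ∈ range n, ∏ j ∈ (range n).erase i, c j)
          + e * (a 0 * ∏ j ∈ range n, c j) := by
        gcongr
        · exact hc n
        · exact ih ha' hδ'
        · exact le_mul_prod_range_of_le_mul hc ha'
      _ = e * a 0 * ∑ i ∈ range (n + 1), ∏ j ∈ (range (n + 1)).erase i, c j := by
        rw [range_add_one, Finset.sum_prod_erase_insert Finset.notMem_range_self]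
        ring

end LinearRecursion

theorem specNorm_nonneg {m n : ℕ} (M : Matrix (Fin m) (Fin n) ℝ) : 0 ≤ specNorm M :=
  norm_nonneg _

theorem norm_toEuclideanLin_le {m n : ℕ} (M : Matrix (Fin m) (Fin n) ℝ)
    (v : EuclideanSpace ℝ (Fin n)) :
    ‖Matrix.toEuclideanLin M v‖ ≤ specNorm M * ‖v‖ :=
  (LinearMap.toContinuousLinearMap (Matrix.toEuclideanLin M)).le_opNorm v

theorem specNorm_add_le {m n : ℕ} (A B : Matrix (Fin m) (Fin n) ℝ) :
    specNorm (A + B) ≤ specNorm A + specNorm B := by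
  simp only [specNorm, map_add]
  exact norm_add_le _ _

section Network

variable {d : ℕ → ℕ}
  {ψ : ∀ i : ℕ, EuclideanSpace ℝ (Fin (d (i+1))) → EuclideanSpace ℝ (Fin (d (i+1)))}

theorem norm_netOutput_succ_le (hψ : ∀ i, LipschitzWith 1 (ψ i)) (hψ0 : ∀ i, ψ i 0 = 0)
    (W : ∀ i : ℕ, Matrix (Fin (d (i+1))) (Fin (d i)) ℝ) (k : ℕ)
    (x : EuclideanSpace ℝ (Fin (d 0))) :
    ‖netOutput d W ψ (k + 1) x‖ ≤ specNorm (W k) * ‖netOutput d W ψ k x‖ :=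
  calc ‖netOutput d W ψ (k + 1) x‖ ≤ ‖Matrix.toEuclideanLin (W k) (netOutput d W ψ k x)‖ := by
        simpa only [netOutput, NNReal.coe_one, one_mul] using (hψ k).norm_le_mul (hψ0 k) _
    _ ≤ specNorm (W k) * ‖netOutput d W ψ k x‖ := norm_toEuclideanLin_le _ _

theorem norm_netOutput_add_sub_succ_le (hψ : ∀ i, LipschitzWith 1 (ψ i))
    (W U : ∀ i : ℕ, Matrix (Fin (d (i+1))) (Fin (d i)) ℝ) (k : ℕ)
    (x : EuclideanSpace ℝ (Fin (d 0))) :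
    ‖netOutput d (fun i => W i + U i) ψ (k + 1) x - netOutput d W ψ (k + 1) x‖ ≤
      specNorm (W k) * ‖netOutput d (fun i => W i + U i) ψ k x - netOutput d W ψ k x‖ +
        specNorm (U k) * ‖netOutput d (fun i => W i + U i) ψ k x‖ := by
  set y' := netOutput d (fun i => W i + U i) ψ k x
  set y := netOutput d W ψ k x
  have hsplit : Matrix.toEuclideanLin (W k + U k) y' - Matrix.toEuclideanLin (W k) y =
      Matrix.toEuclideanLin (W k) (y' - y) + Matrix.toEuclideanLin (U k) y' := by
    simp only [map_add, map_sub, LinearMap.add_apply]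
    abel
  calc ‖netOutput d (fun i => W i + U i) ψ (k + 1) x - netOutput d W ψ (k + 1) x‖
      ≤ ‖Matrix.toEuclideanLin (W k + U k) y' - Matrix.toEuclideanLin (W k) y‖ := by
        simpa only [netOutput, NNReal.coe_one, one_mul, dist_eq_norm] using (hψ k).dist_le_mul
          (Matrix.toEuclideanLin (W k + U k) y') (Matrix.toEuclideanLin (W k) y)
    _ ≤ ‖Matrix.toEuclideanLin (W k) (y' - y)‖ + ‖Matrix.toEuclideanLin (U k) y'‖ := by
        rw [hsplit]
        exact norm_add_le _ _
    _ ≤ specNorm (W k) * ‖y' - y‖ + specNorm (U k) * ‖y'‖ :=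
        add_le_add (norm_toEuclideanLin_le _ _) (norm_toEuclideanLin_le _ _)

end Network

theorem net_perturbation_bound_general (L : ℕ) (d : ℕ → ℕ)
    (W U : ∀ i : ℕ, Matrix (Fin (d (i+1))) (Fin (d i)) ℝ)
    (ψ : ∀ i : ℕ, EuclideanSpace ℝ (Fin (d (i+1))) → EuclideanSpace ℝ (Fin (d (i+1))))
    (hψ : ∀ i, LipschitzWith 1 (ψ i)) (hψ0 : ∀ i, ψ i 0 = 0)
    (e : ℝ) (he : 0 ≤ e) (hU : ∀ i < L, specNorm (U i) ≤ e)
    (x : EuclideanSpace ℝ (Fin (d 0))) :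
    ‖netOutput d (fun i => W i + U i) ψ L x - netOutput d W ψ L x‖ ≤
      e * ‖x‖ * ∑ i ∈ Finset.range L,
        (∏ j ∈ Finset.range L, (specNorm (W j) + e)) / (specNorm (W i) + e) := by
  have hc : ∀ j, 0 ≤ specNorm (W j) + e := fun j => add_nonneg (specNorm_nonneg _) he
  have hgrowth : ∀ k < L, ‖netOutput d (fun i => W i + U i) ψ (k + 1) x‖ ≤
      (specNorm (W k) + e) * ‖netOutput d (fun i => W i + U i) ψ k x‖ := fun k hk =>
    (norm_netOutput_succ_le hψ hψ0 _ k x).trans <| by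
      gcongr
      exact (specNorm_add_le _ _).trans (add_le_add_right (hU k hk) _)
  have hdiff : ∀ k < L,
      ‖netOutput d (fun i => W i + U i) ψ (k + 1) x - netOutput d W ψ (k + 1) x‖ ≤
        (specNorm (W k) + e) * ‖netOutput d (fun i => W i + U i) ψ k x - netOutput d W ψ k x‖ +
          e * ‖netOutput d (fun i => W i + U i) ψ k x‖ := fun k hk =>
    (norm_netOutput_add_sub_succ_le hψ W U k x).trans <| by
      gcongr
      · exact le_add_of_nonneg_right he
      · exact hU k hk
  have hbound := le_sum_prod_erase_range_of_le_mul_add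
    (a := fun k => ‖netOutput d (fun i => W i + U i) ψ k x‖)
    (δ := fun k => ‖netOutput d (fun i => W i + U i) ψ k x - netOutput d W ψ k x‖)
    hc he hgrowth hdiff (by simp [netOutput])
  rcases he.eq_or_lt with rfl | hepos
  · simpa using hbound
  · refine hbound.trans_eq ?_
    congr 1
    refine sum_congr rfl fun i hi => ?_
    rw [eq_div_iff (add_pos_of_nonneg_of_pos (specNorm_nonneg _) hepos).ne', prod_erase_mul _ _ hi]

/-- Deterministic perturbation bound for a feedforward network. -/
theorem net_perturbation_bound (L : ℕ) (hL : 0 < L) (d : ℕ → ℕ)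
    (W U : ∀ i : ℕ, Matrix (Fin (d (i+1))) (Fin (d i)) ℝ)
    (ψ : ∀ i : ℕ, EuclideanSpace ℝ (Fin (d (i+1))) → EuclideanSpace ℝ (Fin (d (i+1))))
    (hψ : ∀ i, LipschitzWith 1 (ψ i)) (hψ0 : ∀ i, ψ i 0 = 0)
    (e : ℝ) (he : 0 ≤ e) (hU : ∀ i < L, specNorm (U i) ≤ e)
    (x : EuclideanSpace ℝ (Fin (d 0))) :
    ‖netOutput d (fun i => W i + U i) ψ L x - netOutput d W ψ L x‖ ≤
      e * ‖x‖ * ∑ i ∈ Finset.range L,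
        (∏ j ∈ Finset.range L, (specNorm (W j) + e)) / (specNorm (W i) + e) :=
  net_perturbation_bound_general L d W U ψ hψ hψ0 e he hU x
end

section
/- Let L be a positive integer and let B_1, …, B_L and D_1, …, D_L be real numbers with B_k ≥ 1 and D_k ≥ 0 for every k. Set α = Σ_{i=1}^{L} Π_{j=1}^{L} (B_j + D_j) / (B_i + D_i). Then α ≥ L, and for every real e with 0 ≤ e ≤ 1/(6α), it holds that e ≤ (B_k + D_k)/(6L) for every k, and Σ_{i=1}^{L} Π_{j=1}^{L} (B_j + D_j + e) / (B_i + D_i + e) ≤ (3/2) · α. -/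
open MeasureTheory ProbabilityTheory Finset

/-!
Each term of `α` is the product of the `L - 1` factors `B j + D j` other than the `i`-th, all
`≥ 1`, so every term is `≥ 1` and `α ≥ L`; hence `L e ≤ 1 / 6`. A factor `c ≥ 1` grows to
`c + e ≤ c (1 + e)`, so each term grows by at most `(1 + e) ^ L ≤ exp (L e) ≤ 1 / (1 - L e) ≤ 6 / 5`.
-/

namespace Finset

variable {ι : Type*} {s : Finset ι} {f : ι → ℝ}

lemma prod_div_eq_prod_erase [DecidableEq ι] {i : ι} (hi : i ∈ s) (hfi : f i ≠ 0) :
    (∏ j ∈ s, f j) / f i = ∏ j ∈ s.erase i, f j := by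
  rw [← mul_prod_erase s f hi, mul_div_cancel_left₀ _ hfi]

lemma card_le_sum_prod_div [DecidableEq ι] (hf : ∀ j ∈ s, 1 ≤ f j) :
    (#s : ℝ) ≤ ∑ i ∈ s, (∏ j ∈ s, f j) / f i := by
  rw [← nsmul_one]
  refine card_nsmul_le_sum _ _ _ fun i hi => ?_
  rw [prod_div_eq_prod_erase hi (by linarith [hf i hi])]
  exact one_le_prod fun j hj => hf j (mem_of_mem_erase hj)

lemma prod_add_le_one_add_pow_mul_prod {e : ℝ} (he : 0 ≤ e) (hf : ∀ j ∈ s, 1 ≤ f j) :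
    ∏ j ∈ s, (f j + e) ≤ (1 + e) ^ #s * ∏ j ∈ s, f j := by
  rw [← prod_const, ← prod_mul_distrib]
  refine prod_le_prod (fun j hj => by linarith [hf j hj]) fun j hj => ?_
  nlinarith [hf j hj]

lemma sum_prod_add_div_le [DecidableEq ι] {e : ℝ} (he : 0 ≤ e) (hf : ∀ j ∈ s, 1 ≤ f j) :
    ∑ i ∈ s, (∏ j ∈ s, (f j + e)) / (f i + e) ≤
      (1 + e) ^ #s * ∑ i ∈ s, (∏ j ∈ s, f j) / f i := by
  rw [mul_sum]
  refine sum_le_sum fun i hi => ?_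
  have hfi := hf i hi
  rw [prod_div_eq_prod_erase (f := fun j => f j + e) hi (by linarith),
    prod_div_eq_prod_erase hi (by linarith)]
  calc ∏ j ∈ s.erase i, (f j + e)
      ≤ (1 + e) ^ #(s.erase i) * ∏ j ∈ s.erase i, f j :=
        prod_add_le_one_add_pow_mul_prod he fun j hj => hf j (mem_of_mem_erase hj)
    _ ≤ (1 + e) ^ #s * ∏ j ∈ s.erase i, f j := by
        gcongr
        · exact prod_nonneg fun j hj => by linarith [hf j (mem_of_mem_erase hj)]
        · linarith
        · exact erase_subset i s

end Finset

lemma one_add_pow_le_three_halves {e : ℝ} {n : ℕ} (he : 0 ≤ e) (hne : n * e ≤ 1 / 6) :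
    (1 + e) ^ n ≤ 3 / 2 :=
  calc (1 + e) ^ n ≤ Real.exp e ^ n := by
        gcongr
        linarith [Real.add_one_le_exp e]
    _ = Real.exp (n * e) := (Real.exp_nat_mul e n).symm
    _ ≤ 1 / (1 - n * e) := Real.exp_bound_div_one_sub_of_interval (by positivity) (by linarith)
    _ ≤ 3 / 2 := by rw [div_le_iff₀ (by linarith)]; linarith

theorem alpha_bounds_general (L : ℕ) (B D : ℕ → ℝ)
    (hB : ∀ k < L, 1 ≤ B k) (hD : ∀ k < L, 0 ≤ D k) :
    (L : ℝ) ≤ ∑ i ∈ Finset.range L, (∏ j ∈ Finset.range L, (B j + D j)) / (B i + D i) ∧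
    ∀ e : ℝ, 0 ≤ e →
      e ≤ 1 / (6 * ∑ i ∈ Finset.range L,
          (∏ j ∈ Finset.range L, (B j + D j)) / (B i + D i)) →
      (∀ k < L, e ≤ (B k + D k) / (6 * L)) ∧
      (∑ i ∈ Finset.range L, (∏ j ∈ Finset.range L, (B j + D j + e)) / (B i + D i + e)) ≤
        3 / 2 * ∑ i ∈ Finset.range L, (∏ j ∈ Finset.range L, (B j + D j)) / (B i + D i) := by
  have hBD : ∀ k ∈ range L, 1 ≤ B k + D k := fun k hk => by
    linarith [hB k (mem_range.mp hk), hD k (mem_range.mp hk)]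
  have hLα := card_range L ▸ card_le_sum_prod_div hBD
  refine ⟨hLα, fun e he heα => ?_⟩
  set α := ∑ i ∈ range L, (∏ j ∈ range L, (B j + D j)) / (B i + D i)
  -- `α = 0` forces `e = 0`, through the convention `1 / 0 = 0`.
  have hLe : L * e ≤ 1 / 6 := by
    rcases (L.cast_nonneg.trans hLα).eq_or_lt with hα | hα
    · rw [← hα, mul_zero, div_zero] at heα
      nlinarith
    · calc L * e ≤ α * (1 / (6 * α)) := by gcongr
        _ = 1 / 6 := by field_simp
  refine ⟨fun k hk => ?_, ?_⟩
  · have hL : (0 : ℝ) < L := by exact_mod_cast hk.trans_le' k.zero_le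
    rw [le_div_iff₀ (by positivity)]
    linarith [hBD k (mem_range.mpr hk)]
  · calc _ ≤ (1 + e) ^ #(range L) * α := sum_prod_add_div_le he hBD
      _ ≤ 3 / 2 * α := by
        gcongr
        · exact L.cast_nonneg.trans hLα
        · exact one_add_pow_le_three_halves he (by rwa [card_range])

theorem alpha_bounds (L : ℕ) (hL : 0 < L) (B D : ℕ → ℝ)
    (hB : ∀ k < L, 1 ≤ B k) (hD : ∀ k < L, 0 ≤ D k) :
    (L : ℝ) ≤ ∑ i ∈ Finset.range L, (∏ j ∈ Finset.range L, (B j + D j)) / (B i + D i) ∧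
    ∀ e : ℝ, 0 ≤ e →
      e ≤ 1 / (6 * ∑ i ∈ Finset.range L,
          (∏ j ∈ Finset.range L, (B j + D j)) / (B i + D i)) →
      (∀ k < L, e ≤ (B k + D k) / (6 * L)) ∧
      (∑ i ∈ Finset.range L, (∏ j ∈ Finset.range L, (B j + D j + e)) / (B i + D i + e)) ≤
        3 / 2 * ∑ i ∈ Finset.range L, (∏ j ∈ Finset.range L, (B j + D j)) / (B i + D i) :=
  alpha_bounds_general L B D hB hD
end
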